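/- arXiv:1309.6911 — 8 statements merged into one kernel-verified Lean document; each statement's English description precedes it below -/
import Mathlib

section
/- If a and b are elements of a C*-algebra, a has Moore-Penrose inverse a†, and the pair (a,b) doubly commutes (ab = ba and ab* = b*a), then a†b = ba†. -/
/-!
Write `p = a a†` and `q = a† a`; both are self-adjoint. If `c` commutes with `a`, then
`c p = p c p`, i.e. the range of `p` is `c`-invariant. Double commutation makes it invariant under
`b` and `b*`, and a self-adjoint `p` whose range is invariant under `b` and `b*` commutes with `b`.
Applying the same to `a*`, whose Moore-Penrose inverse is `(a†)*`, shows that `q` commutes with `b`,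
and then `a† b = a† p b = a† b a a† = a† a b a† = q b a† = b q a† = b a†`.
-/

/-- `b` satisfies the four Penrose equations for `a`. -/
def IsMP {R : Type*} [Ring R] [StarRing R] (a b : R) : Prop :=
  a * b * a = a ∧ b * a * b = b ∧ star (b * a) = b * a ∧ star (a * b) = a * b

variable {A : Type*} [NormedRing A] [StarRing A] [CStarRing A] [CompleteSpace A]
  [NormedAlgebra ℂ A] [StarModule ℂ A]

section Ring

variable {R : Type*} [Ring R]

theorem mul_mul_eq_mul_mul_mul_of_commute {a ad c : R} (haa : a * ad * a = a)
    (hc : Commute a c) : c * (a * ad) = a * ad * c * (a * ad) := by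
  calc c * (a * ad) = a * c * ad := by rw [← mul_assoc, hc.eq]
    _ = a * ad * (a * c) * ad := by rw [← mul_assoc (a * ad) a c, haa]
    _ = a * ad * c * (a * ad) := by rw [hc.eq]; noncomm_ring

variable [StarRing R]

theorem IsSelfAdjoint.commute_of_mul_eq_mul_mul_mul {p c : R} (hp : IsSelfAdjoint p)
    (hc : c * p = p * c * p) (hc' : star c * p = p * star c * p) : Commute p c := by
  have hpc : p * c = p * c * p := by
    simpa only [star_mul, star_star, hp.star_eq, mul_assoc] using congrArg star hc'
  rw [Commute, SemiconjBy, hpc, hc]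

namespace IsMP

variable {a ad b : R}

protected theorem star (h : IsMP a ad) : IsMP (star a) (star ad) := by
  obtain ⟨h1, h2, h3, h4⟩ := h
  refine ⟨?_, ?_, ?_, ?_⟩
  · rw [← star_mul, ← star_mul, ← mul_assoc, h1]
  · rw [← star_mul, ← star_mul, ← mul_assoc, h2]
  · rw [← star_mul, star_star, h4]
  · rw [← star_mul, star_star, h3]

theorem commute_mul_right_of_commute (h : IsMP a ad) (hb : Commute a b)
    (hb' : Commute a (star b)) : Commute (a * ad) b :=
  IsSelfAdjoint.commute_of_mul_eq_mul_mul_mul h.2.2.2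
    (mul_mul_eq_mul_mul_mul_of_commute h.1 hb) (mul_mul_eq_mul_mul_mul_of_commute h.1 hb')

theorem commute_mul_left_of_commute (h : IsMP a ad) (hb : Commute a b)
    (hb' : Commute a (star b)) : Commute (ad * a) b := by
  have hq : star a * star ad = ad * a := by rw [← star_mul, h.2.2.1]
  simpa only [hq] using
    h.star.commute_mul_right_of_commute (by simpa only [star_star] using hb'.star_star)
      hb.star_star

theorem commute_of_commute (h : IsMP a ad) (hb : Commute a b) (hb' : Commute a (star b)) :
    Commute ad b := by
  have hp := (h.commute_mul_right_of_commute hb hb').eq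
  have hq := (h.commute_mul_left_of_commute hb hb').eq
  calc ad * b = ad * (a * ad * b) := by rw [← mul_assoc, ← mul_assoc, h.2.1]
    _ = ad * (a * b) * ad := by rw [hp, hb.eq]; noncomm_ring
    _ = b * ad := by rw [← mul_assoc, hq, mul_assoc b, h.2.1]

end IsMP

end Ring

theorem stmt4 (a ad b : A) (ha : IsMP a ad)
    (h1 : a * b = b * a) (h2 : a * star b = star b * a) :
    ad * b = b * ad :=
  (ha.commute_of_commute h1 h2).eq
end

section
/- If a and b are elements of a C*-algebra, a has Moore-Penrose inverse a†, and (a,b) doubly commutes, then (a†, b) doubly commutes: a†b = ba† and a†b* = b*a†. -/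
namespace IsSelfAdjoint

variable {R : Type*} [Semigroup R] [StarMul R] {q b : R}

theorem commute_of_mul_mul_eq_mul_self (hq : IsSelfAdjoint q) (h : q * b * q = b * q)
    (h' : q * star b * q = star b * q) : Commute q b :=
  calc q * b = star (star b * q) := by rw [star_mul, star_star, hq.star_eq]
    _ = star (q * star b * q) := by rw [h']
    _ = q * b * q := by rw [star_mul, star_mul, star_star, hq.star_eq, mul_assoc]
    _ = b * q := h

theorem commute_of_mul_mul_eq_self_mul (hq : IsSelfAdjoint q) (h : q * b * q = q * b)
    (h' : q * star b * q = q * star b) : Commute q b :=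
  Eq.symm <| calc b * q = star (q * star b) := by rw [star_mul, star_star, hq.star_eq]
    _ = star (q * star b * q) := by rw [h']
    _ = q * b * q := by rw [star_mul, star_mul, star_star, hq.star_eq, mul_assoc]
    _ = q * b := h

end IsSelfAdjoint

namespace IsMP

variable {R : Type*} [Ring R] [StarRing R] {a x b : R}

theorem commute_mul_right (ha : IsMP a x) (hb : Commute a b) (hb' : Commute a (star b)) :
    Commute (a * x) b := by
  obtain ⟨haxa, -, -, hax⟩ := ha
  have absorb : ∀ c, Commute a c → a * x * c * (a * x) = c * (a * x) := fun c hc =>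
    calc a * x * c * (a * x) = a * x * a * c * x := by simp only [mul_assoc, hc.left_comm]
      _ = c * (a * x) := by rw [haxa, hc.eq, mul_assoc]
  exact IsSelfAdjoint.commute_of_mul_mul_eq_mul_self hax (absorb b hb) (absorb _ hb')

theorem commute_mul_left (ha : IsMP a x) (hb : Commute a b) (hb' : Commute a (star b)) :
    Commute (x * a) b := by
  obtain ⟨haxa, -, hxa, -⟩ := ha
  have absorb : ∀ c, Commute a c → x * a * c * (x * a) = x * a * c := fun c hc =>
    calc x * a * c * (x * a) = x * c * (a * x * a) := by simp only [mul_assoc, hc.left_comm]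
      _ = x * a * c := by simp only [haxa, mul_assoc, hc.eq]
  exact IsSelfAdjoint.commute_of_mul_mul_eq_self_mul hxa (absorb b hb) (absorb _ hb')

theorem commute_of_commute_of_commute_star (ha : IsMP a x) (hb : Commute a b)
    (hb' : Commute a (star b)) : Commute x b := by
  have hq := ha.commute_mul_right hb hb'
  have hp := ha.commute_mul_left hb hb'
  obtain ⟨-, hxax, -, -⟩ := ha
  calc x * b = x * (a * x) * b := by rw [← mul_assoc, hxax]
    _ = x * a * b * x := by simp only [mul_assoc, ← hq.eq, hb.eq]
    _ = b * x := by rw [hp.eq, mul_assoc, hxax]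

end IsMP

variable {A : Type*} [NormedRing A] [StarRing A] [CStarRing A] [CompleteSpace A]
  [NormedAlgebra ℂ A] [StarModule ℂ A]

theorem stmt5 (a ad b : A) (ha : IsMP a ad)
    (h1 : a * b = b * a) (h2 : a * star b = star b * a) :
    ad * b = b * ad ∧ ad * star b = star b * ad :=
  ⟨ha.commute_of_commute_of_commute_star h1 h2,
    ha.commute_of_commute_of_commute_star h2 ((star_star b).symm ▸ h1)⟩
end

section
/- If a and b are Moore-Penrose invertible elements of a C*-algebra and the pair (a,b) doubly commutes, then the pair (a†, b†) doubly commutes. -/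
section StarRing

variable {R : Type*} [Ring R] [StarRing R]

theorem IsSelfAdjoint.commute_of_mul_mul_eq {e y : R} (he : IsSelfAdjoint e)
    (hy : e * y * e = y * e) (hy' : e * star y * e = star y * e) : Commute e y := by
  have hey : e * y * e = e * y := by
    simpa only [star_mul, star_star, he.star_eq, mul_assoc] using congrArg star hy'
  exact hey.symm.trans hy

variable {a b x : R}

theorem isMP_star (h : IsMP a b) : IsMP (star a) (star b) := by
  obtain ⟨h₁, h₂, h₃, h₄⟩ := h
  exact ⟨by rw [← star_mul, ← star_mul, ← mul_assoc, h₁],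
    by rw [← star_mul, ← star_mul, ← mul_assoc, h₂],
    by rw [← star_mul, star_star, h₄], by rw [← star_mul, star_star, h₃]⟩

namespace IsMP

theorem mul_mul_mul_eq_of_commute (h : IsMP a b) (hx : Commute x a) :
    a * b * x * (a * b) = x * (a * b) := by
  calc a * b * x * (a * b) = a * b * (a * x) * b := by rw [← hx.eq]; noncomm_ring
    _ = a * b * a * x * b := by noncomm_ring
    _ = x * (a * b) := by rw [h.1, ← mul_assoc, ← hx.eq]

theorem commute_mul_pinv (h : IsMP a b) (hx : Commute x a) (hx' : Commute x (star a)) :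
    Commute (a * b) x :=
  IsSelfAdjoint.commute_of_mul_mul_eq h.2.2.2 (h.mul_mul_mul_eq_of_commute hx)
    (h.mul_mul_mul_eq_of_commute hx'.star_left)

theorem commute_pinv_mul (h : IsMP a b) (hx : Commute x a) (hx' : Commute x (star a)) :
    Commute (b * a) x := by
  have hba : b * a = star a * star b := by rw [← star_mul, h.2.2.1]
  rw [hba]
  exact (isMP_star h).commute_mul_pinv hx' (by rwa [star_star])

theorem commute_right (h : IsMP a b) (hx : Commute x a) (hx' : Commute x (star a)) :
    Commute x b := by
  have hl := h.commute_mul_pinv hx hx'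
  have hr := h.commute_pinv_mul hx hx'
  calc x * b = x * (b * a) * b := by rw [mul_assoc x, h.2.1]
    _ = b * (a * x) * b := by rw [← hr.eq, ← mul_assoc]
    _ = b * (x * (a * b)) := by rw [← hx.eq]; noncomm_ring
    _ = b * x := by rw [← hl.eq, ← mul_assoc, ← mul_assoc, h.2.1]

theorem commute_star_right (h : IsMP a b) (hx : Commute x a) (hx' : Commute x (star a)) :
    Commute x (star b) :=
  (h.commute_right hx'.star_left hx.star_star).star_right

end IsMP

end StarRing

variable {A : Type*} [NormedRing A] [StarRing A] [CStarRing A] [CompleteSpace A]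
  [NormedAlgebra ℂ A] [StarModule ℂ A]

theorem stmt6 (a ad b bd : A) (ha : IsMP a ad) (hb : IsMP b bd)
    (h1 : a * b = b * a) (h2 : a * star b = star b * a) :
    ad * bd = bd * ad ∧ ad * star bd = star bd * ad := by
  have hab : Commute a b := h1
  have hab' : Commute a (star b) := h2
  have hb_ad : Commute b ad := ha.commute_right hab.symm hab'.star_left.symm
  have hb'_ad : Commute (star b) ad := ha.commute_right hab'.symm hab.star_star.symm
  exact ⟨hb.commute_right hb_ad.symm hb'_ad.symm, hb.commute_star_right hb_ad.symm hb'_ad.symm⟩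
end

section
/- Let a and b be Moore-Penrose invertible elements of a C*-algebra. The pair (a,b) doubly commutes if and only if the pair (a†, b†) doubly commutes. -/
def DoublyCommute {R : Type*} [Mul R] [Star R] (a b : R) : Prop :=
  Commute a b ∧ Commute a (star b)

section StarRing

variable {R : Type*} [Ring R] [StarRing R] {a ad x : R}

theorem DoublyCommute.symm {a b : R} (h : DoublyCommute a b) : DoublyCommute b a :=
  ⟨h.1.symm, by simpa using h.2.star_star.symm⟩

theorem DoublyCommute.star_left (h : DoublyCommute x a) : DoublyCommute (star x) a :=
  ⟨by simpa using h.2.star_star, h.1.star_star⟩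

namespace IsMP

theorem symm (h : IsMP a ad) : IsMP ad a :=
  ⟨h.2.1, h.1, h.2.2.2, h.2.2.1⟩

theorem mul_mul_self (h : IsMP a ad) (z : R) : a * (ad * (a * z)) = a * z := by
  rw [← mul_assoc, ← mul_assoc, h.1]

theorem star_mul_star_eq_mul_self (h : IsMP a ad) : star a * star ad = ad * a := by
  rw [← star_mul, h.2.2.1]

theorem star_mul_star_eq_self_mul (h : IsMP a ad) : star ad * star a = a * ad := by
  rw [← star_mul, h.2.2.2]

theorem mul_mul_star (h : IsMP a ad) : ad * a * star a = star a := by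
  simpa only [star_mul, ← mul_assoc, h.star_mul_star_eq_mul_self] using congrArg star h.1

theorem star_mul_mul (h : IsMP a ad) : star a * (a * ad) = star a := by
  simpa only [star_mul, mul_assoc, h.star_mul_star_eq_self_mul] using congrArg star h.1

theorem commute_mul_self (h : IsMP a ad) (hx : DoublyCommute x a) : Commute x (ad * a) := by
  obtain ⟨hxa, hxa'⟩ := hx
  have hpxp : ad * (a * (x * (ad * a))) = x * (ad * a) := calc
    _ = ad * (a * (star a * (x * star ad))) := by
      rw [← h.star_mul_star_eq_mul_self, hxa'.left_comm]
    _ = star a * (x * star ad) := by simp only [← mul_assoc, h.mul_mul_star]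
    _ = x * (ad * a) := by rw [← hxa'.left_comm, h.star_mul_star_eq_mul_self]
  calc x * (ad * a) = ad * (a * (x * (ad * a))) := hpxp.symm
    _ = ad * (x * (a * (ad * a))) := by rw [hxa.left_comm]
    _ = ad * a * x := by rw [← mul_assoc a, h.1, hxa.eq, mul_assoc]

theorem commute_self_mul (h : IsMP a ad) (hx : DoublyCommute x a) : Commute x (a * ad) := by
  obtain ⟨hxa, hxa'⟩ := hx
  have hqxq : a * (ad * (x * (a * ad))) = a * ad * x := calc
    _ = star ad * (star a * (x * (a * ad))) := by
      rw [← mul_assoc a, ← h.star_mul_star_eq_self_mul, mul_assoc]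
    _ = star ad * (x * star a) := by rw [← hxa'.left_comm, h.star_mul_mul]
    _ = a * ad * x := by rw [hxa'.eq, ← mul_assoc, h.star_mul_star_eq_self_mul]
  calc x * (a * ad) = a * (ad * (a * (x * ad))) := by rw [hxa.left_comm, h.mul_mul_self]
    _ = a * ad * x := by rw [← hxa.left_comm, hqxq]

theorem commute_of_doublyCommute (h : IsMP a ad) (hx : DoublyCommute x a) : Commute x ad := calc
  x * ad = x * (ad * a) * ad := by rw [mul_assoc, h.2.1]
  _ = ad * (x * (a * ad)) := by
    rw [(h.commute_mul_self hx).eq, mul_assoc ad a x, ← hx.1.eq, mul_assoc, mul_assoc x]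
  _ = ad * x := by rw [(h.commute_self_mul hx).eq, ← mul_assoc, ← mul_assoc, h.2.1]

end IsMP

theorem DoublyCommute.isMP_right (hx : DoublyCommute x a) (h : IsMP a ad) : DoublyCommute x ad :=
  ⟨h.commute_of_doublyCommute hx, by simpa using (h.commute_of_doublyCommute hx.star_left).star_star⟩

theorem IsMP.doublyCommute {b bd : R} (ha : IsMP a ad) (hb : IsMP b bd) (h : DoublyCommute a b) :
    DoublyCommute ad bd :=
  ((h.isMP_right hb).symm.isMP_right ha).symm

end StarRing

variable {A : Type*} [NormedRing A] [StarRing A] [CStarRing A] [CompleteSpace A]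
  [NormedAlgebra ℂ A] [StarModule ℂ A]

theorem stmt7 (a ad b bd : A) (ha : IsMP a ad) (hb : IsMP b bd) :
    (a * b = b * a ∧ a * star b = star b * a) ↔
      (ad * bd = bd * ad ∧ ad * star bd = star bd * ad) :=
  ⟨ha.doublyCommute hb, ha.symm.doublyCommute hb.symm⟩
end

section
/- If a and b are Moore-Penrose invertible elements of a C*-algebra and (a,b) doubly commutes, then (ab)† = b†a† = a†b† = (ba)†. -/
/-!
A Moore–Penrose inverse `a'` of `a` commutes with everything that commutes with `a` and `star a`:
from `a' = star a * star a' * a' = a' * star a' * star a` and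
`star a = a' * a * star a = star a * a * a'`, both `x * a'` and `a' * x` equal `a' * x * a * a'`.
For a doubly commuting pair this makes each of `a, a'` commute with each of `b, b'`, and then the
Penrose equations for `a * b` and `b' * a'` are products of those for `a` and for `b`.
-/

namespace IsMP

variable {R : Type*} [Ring R] [StarRing R] {a a' b b' x : R}

lemma eq_star_mul_star_mul (h : IsMP a a') : a' = star a * star a' * a' := by
  conv_lhs => rw [← h.2.1, ← h.2.2.1, star_mul]

lemma eq_mul_star_mul_star (h : IsMP a a') : a' = a' * star a' * star a := by
  conv_lhs => rw [← h.2.1, mul_assoc, ← h.2.2.2, star_mul, ← mul_assoc]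

lemma star_eq_mul_mul_star (h : IsMP a a') : star a = a' * a * star a := by
  conv_lhs => rw [← h.1, mul_assoc, star_mul, h.2.2.1]

lemma star_eq_star_mul_mul (h : IsMP a a') : star a = star a * a * a' := by
  conv_lhs => rw [← h.1, star_mul, h.2.2.2, ← mul_assoc]

lemma commute_of_commute_star (h : IsMP a a') (hx : Commute x a) (hx' : Commute x (star a)) :
    Commute x a' := by
  have left : x * a' = a' * x * a * a' :=
    calc x * a' = x * (star a * star a' * a') := by rw [← h.eq_star_mul_star_mul]
      _ = star a * x * (star a' * a') := by rw [← hx'.eq]; simp only [mul_assoc]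
      _ = a' * a * star a * x * (star a' * a') := by rw [← h.star_eq_mul_mul_star]
      _ = a' * a * x * (star a * star a' * a') := by simp only [mul_assoc, hx'.left_comm]
      _ = a' * a * x * a' := by rw [← h.eq_star_mul_star_mul]
      _ = a' * x * a * a' := by simp only [mul_assoc, hx.left_comm]
  have right : a' * x = a' * x * a * a' :=
    calc a' * x = a' * star a' * star a * x := by rw [← h.eq_mul_star_mul_star]
      _ = a' * star a' * x * star a := by simp only [mul_assoc, hx'.eq]
      _ = a' * star a' * x * (star a * a * a') := by rw [← h.star_eq_star_mul_mul]
      _ = a' * star a' * star a * x * a * a' := by simp only [mul_assoc, hx'.left_comm]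
      _ = a' * x * a * a' := by rw [← h.eq_mul_star_mul_star]
  exact left.trans right.symm

lemma mul (ha : IsMP a a') (hb : IsMP b b') (h₁ : Commute a b) (h₂ : Commute a b')
    (h₃ : Commute a' b) (h₄ : Commute a' b') : IsMP (a * b) (b' * a') := by
  have hab : a * b * (b' * a') = a * a' * (b * b') := by
    simp only [mul_assoc, h₃.symm.left_comm, h₄.symm.eq]
  have hba : b' * a' * (a * b) = a' * a * (b' * b) := by
    simp only [mul_assoc, h₂.symm.left_comm, h₄.symm.left_comm]
  refine ⟨?_, ?_, ?_, ?_⟩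
  · calc a * b * (b' * a') * (a * b) = a * a' * a * (b * b' * b) := by
          rw [hab]; simp only [mul_assoc, h₁.symm.left_comm, h₂.symm.left_comm]
      _ = a * b := by rw [ha.1, hb.1]
  · calc b' * a' * (a * b) * (b' * a') = a' * a * a' * (b' * b * b') := by
          rw [hba]; simp only [mul_assoc, h₃.symm.left_comm, h₄.symm.left_comm, h₄.symm.eq]
      _ = b' * a' := by rw [ha.2.1, hb.2.1, h₄.eq]
  · rw [hba, star_mul, ha.2.2.1, hb.2.2.1]
    exact ((h₄.mul_left h₂).mul_right (h₃.mul_left h₁)).eq.symm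
  · rw [hab, star_mul, ha.2.2.2, hb.2.2.2]
    exact ((h₁.mul_left h₃).mul_right (h₂.mul_left h₄)).eq.symm

end IsMP

variable {A : Type*} [NormedRing A] [StarRing A] [CStarRing A] [CompleteSpace A]
  [NormedAlgebra ℂ A] [StarModule ℂ A]

theorem stmt9 (a ad b bd : A) (ha : IsMP a ad) (hb : IsMP b bd)
    (h1 : a * b = b * a) (h2 : a * star b = star b * a) :
    IsMP (a * b) (bd * ad) ∧ bd * ad = ad * bd ∧ IsMP (b * a) (ad * bd) := by
  have h_a_b : Commute a b := h1
  have h_a_sb : Commute a (star b) := h2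
  have h_sa_b : Commute (star a) b := commute_star_comm.mpr h_a_sb
  have h_sa_sb : Commute (star a) (star b) := commute_star_star.mpr h_a_b
  have h_a_bd : Commute a bd := hb.commute_of_commute_star h_a_b h_a_sb
  have h_b_ad : Commute b ad := ha.commute_of_commute_star h_a_b.symm h_sa_b.symm
  have h_sb_ad : Commute (star b) ad := ha.commute_of_commute_star h_a_sb.symm h_sa_sb.symm
  have h_ad_bd : Commute ad bd := hb.commute_of_commute_star h_b_ad.symm h_sb_ad.symm
  exact ⟨ha.mul hb h_a_b h_a_bd h_b_ad.symm h_ad_bd, h_ad_bd.eq.symm,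
    hb.mul ha h_a_b.symm h_b_ad h_a_bd.symm h_ad_bd.symm⟩
end

section
/- If b is a Moore-Penrose invertible normal element of a C*-algebra (b b* = b* b), then for every natural number n, bⁿ is Moore-Penrose invertible and (bⁿ)† = (b†)ⁿ. -/
namespace IsMP

variable {R : Type*} [Ring R] [StarRing R] {a x : R}

lemma star_mul_star_eq (h : IsMP a x) : star a * star x = x * a := by
  rw [← star_mul, h.2.2.1]

lemma star_mul_star_eq' (h : IsMP a x) : star x * star a = a * x := by
  rw [← star_mul, h.2.2.2]

lemma mul_mul_star_eq (h : IsMP a x) : x * a * star a = star a := by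
  rw [← h.star_mul_star_eq, mul_assoc, ← star_mul, ← star_mul, h.1]

lemma star_mul_mul_eq (h : IsMP a x) : star a * a * x = star a := by
  calc star a * a * x = star a * (star x * star a) := by rw [mul_assoc, h.star_mul_star_eq']
    _ = star (a * x * a) := by simp only [star_mul, mul_assoc]
    _ = star a := by rw [h.1]

lemma mul_eq_zero_of_mul_mul_star_eq_zero (h : IsMP a x) {y : R} (hy : y * (a * star a) = 0) :
    y * a = 0 := by
  calc y * a = y * (a * x * a) := by rw [h.1]
    _ = y * (a * star a) * star x := by
      rw [mul_assoc a, ← h.star_mul_star_eq]; simp only [mul_assoc]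
    _ = 0 := by rw [hy, zero_mul]

lemma mul_eq_zero_of_star_mul_mul_eq_zero (h : IsMP a x) {y : R} (hy : star a * a * y = 0) :
    a * y = 0 := by
  calc a * y = a * x * a * y := by rw [h.1]
    _ = star x * (star a * a * y) := by rw [← h.star_mul_star_eq']; simp only [mul_assoc]
    _ = 0 := by rw [hy, mul_zero]

lemma commute_of_normal (h : IsMP a x) (hn : a * star a = star a * a) : Commute a x := by
  have hxaa : x * a * a = a := by
    have hy : (x * a - 1) * (a * star a) = 0 := by
      calc (x * a - 1) * (a * star a) = (x * a - 1) * (star a * a) := by rw [hn]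
        _ = (x * a * star a - star a) * a := by simp only [sub_mul, one_mul, mul_assoc]
        _ = 0 := by rw [h.mul_mul_star_eq, sub_self, zero_mul]
    have := h.mul_eq_zero_of_mul_mul_star_eq_zero hy
    rwa [sub_one_mul, sub_eq_zero] at this
  have haax : a * a * x = a := by
    have hy : star a * a * (a * x - 1) = 0 := by
      calc star a * a * (a * x - 1) = a * star a * (a * x - 1) := by rw [hn]
        _ = a * (star a * a * x - star a) := by simp only [mul_sub, mul_one, mul_assoc]
        _ = 0 := by rw [h.star_mul_mul_eq, sub_self, mul_zero]
    have := h.mul_eq_zero_of_star_mul_mul_eq_zero hy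
    rwa [mul_sub_one, ← mul_assoc, sub_eq_zero] at this
  calc a * x = x * a * a * x := by rw [hxaa]
    _ = x * (a * a * x) := by simp only [mul_assoc]
    _ = x * a := by rw [haax]

lemma pow (h : IsMP a x) (hc : Commute a x) (n : ℕ) : IsMP (a ^ n) (x ^ n) := by
  refine ⟨?_, ?_, ?_, ?_⟩
  · rw [← hc.mul_pow, ← ((Commute.refl a).mul_left hc.symm).mul_pow, h.1]
  · rw [← hc.symm.mul_pow, ← ((Commute.refl x).mul_left hc).mul_pow, h.2.1]
  · rw [← hc.symm.mul_pow, star_pow, h.2.2.1]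
  · rw [← hc.mul_pow, star_pow, h.2.2.2]

end IsMP

variable {A : Type*} [NormedRing A] [StarRing A] [CStarRing A] [CompleteSpace A]
  [NormedAlgebra ℂ A] [StarModule ℂ A]

theorem stmt14 (b bd : A) (hb : IsMP b bd) (hn : b * star b = star b * b) :
    ∀ n : ℕ, IsMP (b ^ n) (bd ^ n) :=
  hb.pow (hb.commute_of_normal hn)
end

section
/- If a and b are commuting normal Moore-Penrose invertible elements of a C*-algebra, then a b* is Moore-Penrose invertible and (a b*)† = (b†)* a† = a† (b†)*. -/
theorem commute_of_mul_mul_eq_of_isSelfAdjoint {R : Type*} [Semigroup R] [StarMul R] {p x : R}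
    (hp : IsSelfAdjoint p) (hx : p * x * p = x * p) (hx' : p * star x * p = star x * p) :
    Commute x p := by
  have hpx : p * x * p = p * x := by
    simpa only [star_mul, star_star, hp.star_eq, mul_assoc] using congrArg star hx'
  exact hx.symm.trans hpx

section Ring

variable {R : Type*} [Ring R] [StarRing R] {a ad b bd x : R}

theorem isMP_star_star : IsMP (star a) (star ad) ↔ IsMP a ad := by
  suffices h : ∀ {a ad : R}, IsMP a ad → IsMP (star a) (star ad) from
    ⟨fun h' => by simpa only [star_star] using h h', h⟩
  rintro a ad ⟨h₁, h₂, h₃, h₄⟩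
  refine ⟨?_, ?_, ?_, ?_⟩
  · simpa only [star_mul, mul_assoc] using congrArg star h₁
  · simpa only [star_mul, mul_assoc] using congrArg star h₂
  · rw [← star_mul, h₄, h₄]
  · rw [← star_mul, h₃, h₃]

theorem IsMP.commute_mul_of_commute (h : IsMP a ad) (hxa : Commute x a)
    (hxa' : Commute x (star a)) : Commute x (a * ad) := by
  have key : ∀ y, Commute y a → a * ad * y * (a * ad) = y * (a * ad) := fun y hy =>
    calc a * ad * y * (a * ad) = a * ad * (y * a) * ad := by simp only [mul_assoc]
      _ = a * ad * a * y * ad := by rw [hy.eq]; simp only [mul_assoc]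
      _ = y * (a * ad) := by rw [h.1, ← hy.eq, mul_assoc]
  exact commute_of_mul_mul_eq_of_isSelfAdjoint h.2.2.2 (key x hxa) (key _ hxa'.star_left)

theorem IsMP.commute_of_commute_s16 (h : IsMP a ad) (hxa : Commute x a)
    (hxa' : Commute x (star a)) : Commute x ad := by
  have range : Commute x (a * ad) := h.commute_mul_of_commute hxa hxa'
  have support : Commute x (ad * a) := by
    simpa only [← star_mul, h.2.2.1] using
      (isMP_star_star.2 h).commute_mul_of_commute hxa' (by rwa [star_star])
  calc x * ad = x * (ad * a) * ad := by rw [mul_assoc, h.2.1]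
    _ = ad * (x * (a * ad)) := by rw [support.eq, hxa.left_comm]; simp only [mul_assoc]
    _ = ad * x := by rw [range.eq, ← mul_assoc, ← mul_assoc, h.2.1]

theorem IsMP.mul_of_commute (ha : IsMP a ad) (hb : IsMP b bd) (hab : Commute a b)
    (habd : Commute a bd) (hadb : Commute ad b) (hadbd : Commute ad bd) :
    IsMP (a * b) (ad * bd) := by
  have split₁ : a * b * (ad * bd) = a * ad * (b * bd) := hadb.symm.mul_mul_mul_comm a bd
  have split₂ : ad * bd * (a * b) = ad * a * (bd * b) := habd.symm.mul_mul_mul_comm ad b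
  have hb_a : Commute (b * bd) a := hab.symm.mul_left habd.symm
  have hb_ad : Commute (bd * b) ad := hadbd.symm.mul_left hadb.symm
  refine ⟨?_, ?_, ?_, ?_⟩
  · rw [split₁, hb_a.mul_mul_mul_comm, ha.1, hb.1]
  · rw [split₂, hb_ad.mul_mul_mul_comm, ha.2.1, hb.2.1]
  · rw [split₂]
    exact (IsSelfAdjoint.commute_iff ha.2.2.1 hb.2.2.1).1
      ((hadbd.mul_right hadb).mul_left (habd.mul_right hab))
  · rw [split₁]
    exact (IsSelfAdjoint.commute_iff ha.2.2.2 hb.2.2.2).1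
      ((hab.mul_right habd).mul_left (hadb.mul_right hadbd))

end Ring

variable {A : Type*} [NormedRing A] [StarRing A] [CStarRing A] [CompleteSpace A]
  [NormedAlgebra ℂ A] [StarModule ℂ A]

theorem stmt16 (a ad b bd : A) (ha : IsMP a ad) (hb : IsMP b bd)
    (hna : a * star a = star a * a) (hnb : b * star b = star b * b)
    (hc : a * b = b * a) :
    IsMP (a * star b) (star bd * ad) ∧ star bd * ad = ad * star bd := by
  let _ : CStarAlgebra A := {}
  have hab : Commute a b := hc
  have ha_sb : Commute a (star b) := IsStarNormal.commute_star_right ⟨hnb.symm⟩ hab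
  have hb_sa : Commute b (star a) := IsStarNormal.commute_star_right ⟨hna.symm⟩ hab.symm
  have had_b : Commute ad b := (ha.commute_of_commute_s16 hab.symm hb_sa).symm
  have had_sb : Commute ad (star b) :=
    (ha.commute_of_commute_s16 ha_sb.symm hab.star_star.symm).symm
  have hsb : IsMP (star b) (star bd) := isMP_star_star.2 hb
  have ha_sbd : Commute a (star bd) := hsb.commute_of_commute_s16 ha_sb (by rwa [star_star])
  have had_sbd : Commute ad (star bd) := hsb.commute_of_commute_s16 had_sb (by rwa [star_star])
  refine ⟨?_, had_sbd.symm.eq⟩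
  rw [had_sbd.symm.eq]
  exact ha.mul_of_commute hsb ha_sb ha_sbd had_sb had_sbd
end

section
/- If a and b are Moore-Penrose invertible elements of a C*-algebra with (a,b) doubly commuting, then (a*b)† = b†(a†)* = (a†)*b† = (ba*)†. -/
namespace IsMP

variable {R : Type*} [Ring R] [StarRing R] {a y x : R}

theorem star_star (h : IsMP a y) : IsMP (star a) (star y) := by
  obtain ⟨h₁, h₂, h₃, h₄⟩ := h
  refine ⟨?_, ?_, ?_, ?_⟩
  · simpa only [star_mul, mul_assoc] using congrArg star h₁
  · simpa only [star_mul, mul_assoc] using congrArg star h₂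
  · rw [← star_mul, _root_.star_star, h₄]
  · rw [← star_mul, _root_.star_star, h₃]

theorem star_mul_star (h : IsMP a y) : star a * star y = y * a := by
  rw [← star_mul, h.2.2.1]

theorem mul_mul_star_mul (h : IsMP a y) (c : R) : y * (a * (star a * c)) = star a * c := by
  rw [← mul_assoc, ← mul_assoc, ← h.star_mul_star, h.star_star.1]

theorem commute_mul_self_s19 (h : IsMP a y) (hxa : Commute x a) (hxa' : Commute x (star a)) :
    Commute x (y * a) := by
  have hright : x * (y * a) = y * (a * (x * (y * a))) := by
    rw [← h.star_mul_star, hxa'.left_comm, h.mul_mul_star_mul]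
  have hleft : y * a * x = y * (a * (x * (y * a))) := by
    rw [← hxa.left_comm, ← mul_assoc a, h.1, mul_assoc, hxa.eq]
  exact hright.trans hleft.symm

theorem commute_self_mul_s19 (h : IsMP a y) (hxa : Commute x a) (hxa' : Commute x (star a)) :
    Commute x (a * y) := by
  simpa only [← star_mul, h.2.2.2] using
    h.star_star.commute_mul_self_s19 hxa' (by rwa [_root_.star_star])

theorem commute (h : IsMP a y) (hxa : Commute x a) (hxa' : Commute x (star a)) :
    Commute x y := by
  have hp := (h.commute_self_mul_s19 hxa hxa').eq
  have hq := (h.commute_mul_self_s19 hxa hxa').eq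
  calc x * y = x * (y * a) * y := by rw [mul_assoc, h.2.1]
    _ = y * (x * a) * y := by rw [hq, mul_assoc y a x, hxa.eq]
    _ = y * (x * (a * y)) := by simp only [mul_assoc]
    _ = y * x := by rw [hp, ← mul_assoc, ← mul_assoc, h.2.1]

theorem star_commute (h : IsMP a y) (hxa : Commute x a) (hxa' : Commute x (star a)) :
    Commute x (star y) :=
  h.star_star.commute hxa' (by rwa [_root_.star_star])

theorem mul_s19 {b z : R} (ha : IsMP a y) (hb : IsMP b z) (hab : Commute a b)
    (haz : Commute a z) (hyb : Commute y b) (hyz : Commute y z) : IsMP (a * b) (z * y) := by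
  have hbza : Commute (b * z) a := hab.symm.mul_left haz.symm
  have hzby : Commute (z * b) y := hyz.symm.mul_left hyb.symm
  have hbzay : Commute (b * z) (a * y) := hbza.mul_right (hyb.symm.mul_left hyz.symm)
  have hzbya : Commute (z * b) (y * a) := hzby.mul_right (haz.symm.mul_left hab.symm)
  have hright : a * b * (z * y) = a * y * (b * z) := by
    rw [hyz.symm.eq, hyb.symm.mul_mul_mul_comm]
  have hleft : z * y * (a * b) = y * a * (z * b) := by
    rw [hyz.symm.eq, haz.symm.mul_mul_mul_comm]
  refine ⟨?_, ?_, ?_, ?_⟩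
  · rw [hright, mul_assoc, hbza.left_comm, ← mul_assoc, ha.1, hb.1]
  · rw [hleft, ← hyz.eq, mul_assoc, hzby.left_comm, ← mul_assoc, ha.2.1, hb.2.1]
  · rw [hleft, star_mul, ha.2.2.1, hb.2.2.1, hzbya.eq]
  · rw [hright, star_mul, ha.2.2.2, hb.2.2.2, hbzay.eq]

end IsMP

set_option linter.unusedSectionVars false

variable {A : Type*} [NormedRing A] [StarRing A] [CStarRing A] [CompleteSpace A]
  [NormedAlgebra ℂ A] [StarModule ℂ A]

theorem stmt19 (a ad b bd : A) (ha : IsMP a ad) (hb : IsMP b bd)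
    (h1 : a * b = b * a) (h2 : a * star b = star b * a) :
    IsMP (star a * b) (bd * star ad) ∧ bd * star ad = star ad * bd ∧
      IsMP (b * star a) (bd * star ad) := by
  have hab : Commute (star a) b := Commute.star_left h2
  have habd : Commute (star a) bd := hb.commute hab (Commute.star_star h1)
  have hadb : Commute (star ad) b := (ha.star_commute (Commute.symm h1) hab.symm).symm
  have hadbd : Commute (star ad) bd :=
    (ha.star_commute (hb.commute h1 h2).symm habd.symm).symm
  have hmul := ha.star_star.mul_s19 hb hab habd hadb hadbd
  exact ⟨hmul, hadbd.eq.symm, hab.eq ▸ hmul⟩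
end
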